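/- The Equal-Filling algorithm does not achieve α-USW for any α > 1/2: on the instance with n singleton classes {c₁},…,{cₙ} plus one class of n agents, where n red items (liked by all agents) arrive first and then n blue items (blue item bᵢ liked only by cᵢ), Equal-Filling attains social welfare n + n/(n+1) while the optimum is 2n. -/

import Mathlib

/-!
During the red phase every one of the `n + 1` classes has unsaturated demand above `1/(n+1)`,
so Equal-Filling hands each class exactly `1/(n+1)` of every red item. After the red phase
each `cᵢ` therefore sits at utility `n/(n+1)`, and blue item `bᵢ` can only raise it to `1`,
contributing `1/(n+1)`. Summing the final utilities gives `n + n/(n+1)`. Matching the red items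
to the big class and `bᵢ` to `cᵢ` saturates every item, so the optimum is `2n`.
-/

open Finset

noncomputable section

variable {A : Type*} [Fintype A] [DecidableEq A] {k : ℕ}

/-- The set of agents that like the item arriving at step `t`. -/
def likersAt (L : List (Finset A)) (t : ℕ) : Finset A := L.getD t ∅

/-- The agents of class `i`. -/
def classAgents (classOf : A → Fin k) (i : Fin k) : Finset A :=
  Finset.univ.filter fun a => classOf a = i

/-- One step of the Equal-Filling algorithm: given current utilities `u` and the
liker set of the arriving item, the item is split equally among classes with an
unsaturated liking agent (each class receives `min β (demand)` where `β` is largest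
with total at most 1), and within each class it is water-filled among the liking
agents, raising the lowest utilities to a common level `γ`. Returns the fraction of
the item given to each agent. -/
def efStep (classOf : A → Fin k) (u : A → ℝ) (likers : Finset A) : A → ℝ :=
  let d : Fin k → ℝ := fun i => ∑ a ∈ likers.filter fun a => classOf a = i, (1 - u a)
  let β : ℝ := sSup {b : ℝ | b ≤ 1 ∧ ∑ i : Fin k, min b (d i) ≤ 1}
  fun a =>
    if a ∈ likers then
      let i := classOf a
      let γ : ℝ := sSup {g : ℝ | g ≤ 1 ∧
        ∑ a' ∈ likers.filter fun a' => classOf a' = i, max (g - u a') 0 ≤ min β (d i)}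
      max (γ - u a) 0
    else 0

/-- The utility (total fraction received) of each agent before step `t` of
Equal-Filling on instance `L`. -/
def efUtil (classOf : A → Fin k) (L : List (Finset A)) : ℕ → A → ℝ
  | 0 => fun _ => 0
  | t + 1 => fun a =>
      efUtil classOf L t a + efStep classOf (efUtil classOf L t) (likersAt L t) a

/-- The fraction of item `t` given to each agent by Equal-Filling. -/
def efAlloc (classOf : A → Fin k) (L : List (Finset A)) (t : ℕ) : A → ℝ :=
  efStep classOf (efUtil classOf L t) (likersAt L t)


/-- Optimistic fractional valuation `V*` of the class with agents `C` for an item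
bundle `y` (for `C = univ`, `y ≡ 1` this is the maximum fractional matching size). -/
def VstarFrac (L : List (Finset A)) (C : Finset A) (y : ℕ → ℝ) : ℝ :=
  sSup {v : ℝ | ∃ x : ℕ → A → ℝ,
    (∀ t a, 0 ≤ x t a) ∧
    (∀ t a, x t a ≠ 0 → a ∈ C ∧ a ∈ likersAt L t ∧ t < L.length) ∧
    (∀ t, ∑ a ∈ C, x t a ≤ y t) ∧
    (∀ a, ∑ t ∈ Finset.range L.length, x t a ≤ 1) ∧
    v = ∑ t ∈ Finset.range L.length, ∑ a ∈ C, x t a}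

/-- The agents of the hard instance for Equal-Filling's welfare: `n` singleton-class
agents `c₁,…,cₙ` (`Sum.inl`) and one big class of `n` agents (`Sum.inr`). -/
abbrev uswAgents (n : ℕ) := Fin n ⊕ Fin n

/-- The class of each agent: `cᵢ` forms its own class `i`; the `Sum.inr` agents all
belong to the last class. -/
def uswClassOf (n : ℕ) : uswAgents n → Fin (n + 1) :=
  Sum.elim (fun i => i.castSucc) (fun _ => Fin.last n)

/-- The items: first `n` red items liked by everyone, then `n` blue items, blue
item `i` liked only by `cᵢ`. -/
def uswInstance (n : ℕ) : List (Finset (uswAgents n)) :=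
  (List.ofFn fun _ : Fin n => (Finset.univ : Finset (uswAgents n))) ++
    (List.ofFn fun i : Fin n => {Sum.inl i})

/-- The social welfare attained by Equal-Filling on the hard instance. -/
def uswEF (n : ℕ) : ℝ :=
  ∑ t ∈ Finset.range (uswInstance n).length, ∑ a : uswAgents n,
    efAlloc (uswClassOf n) (uswInstance n) t a

lemma sSup_waterFill_eq {ι : Type*} (S : Finset ι) (u : ι → ℝ) {v c : ℝ} (hS : S.Nonempty)
    (hu : ∀ a ∈ S, u a = v) (hc : 0 ≤ c) (hfit : v + c / #S ≤ 1) :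
    sSup {g : ℝ | g ≤ 1 ∧ ∑ a ∈ S, max (g - u a) 0 ≤ c} = v + c / #S := by
  have hcard : (0 : ℝ) < #S := by exact_mod_cast hS.card_pos
  refine (congrArg sSup (?_ : _ = Set.Iic (v + c / #S))).trans csSup_Iic
  ext g
  rw [Set.mem_ofPred_eq, Set.mem_Iic, sum_eq_card_nsmul fun a ha => by rw [hu a ha],
    nsmul_eq_mul, ← le_div_iff₀' hcard, max_le_iff]
  constructor
  · rintro ⟨-, hg, -⟩
    linarith
  · intro hg
    exact ⟨hg.trans hfit, by linarith, by positivity⟩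

lemma sSup_equalSplit_eq_one {ι : Type*} [Fintype ι] (d : ι → ℝ) (hd : ∑ i, d i ≤ 1) :
    sSup {b : ℝ | b ≤ 1 ∧ ∑ i, min b (d i) ≤ 1} = 1 := by
  refine (congrArg sSup (?_ : _ = Set.Iic ((1 : ℝ)))).trans csSup_Iic
  ext b
  refine ⟨And.left, fun hb => ⟨hb, ?_⟩⟩
  exact (sum_le_sum fun i _ => min_le_right b (d i)).trans hd

lemma sSup_equalSplit_eq_one_div_card {ι : Type*} [Fintype ι] [Nonempty ι] (d : ι → ℝ)
    (hd : ∀ i, 1 / Fintype.card ι < d i) :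
    sSup {b : ℝ | b ≤ 1 ∧ ∑ i, min b (d i) ≤ 1} = 1 / Fintype.card ι := by
  have hcard : (0 : ℝ) < Fintype.card ι := by exact_mod_cast Fintype.card_pos
  have hsplit : ∑ _i : ι, 1 / (Fintype.card ι : ℝ) = 1 := by
    rw [sum_const, card_univ, nsmul_eq_mul]
    field_simp
  refine (congrArg sSup (?_ : _ = Set.Iic (1 / (Fintype.card ι : ℝ)))).trans csSup_Iic
  ext b
  rw [Set.mem_ofPred_eq, Set.mem_Iic]
  constructor
  · rintro ⟨-, hb⟩
    by_contra! hlt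
    have : ∑ _i : ι, 1 / (Fintype.card ι : ℝ) < ∑ i, min b (d i) :=
      sum_lt_sum_of_nonempty univ_nonempty fun i _ => lt_min hlt (hd i)
    linarith
  · intro hb
    refine ⟨hb.trans (div_le_one_of_le₀ (by exact_mod_cast Fintype.card_pos) hcard.le), ?_⟩
    calc ∑ i, min b (d i) ≤ ∑ _i : ι, 1 / (Fintype.card ι : ℝ) :=
          sum_le_sum fun i _ => (min_le_left _ _).trans hb
      _ = 1 := hsplit

lemma efStep_eq_of_uniform_class {V : Type*} [DecidableEq V] (classOf : V → Fin k)
    (u : V → ℝ) (likers : Finset V) {a : V} (ha : a ∈ likers) {β v : ℝ} {S : Finset V}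
    (hβ : sSup {b : ℝ | b ≤ 1 ∧
      ∑ i : Fin k, min b (∑ a ∈ likers.filter fun a => classOf a = i, (1 - u a)) ≤ 1} = β)
    (hβ0 : 0 ≤ β) (hS : likers.filter (fun a' => classOf a' = classOf a) = S)
    (hu : ∀ a' ∈ S, u a' = v) (hv : v ≤ 1) :
    efStep classOf u likers a = min β (#S * (1 - v)) / #S := by
  have haS : a ∈ S := hS ▸ mem_filter.mpr ⟨ha, rfl⟩
  have hcard : (0 : ℝ) < #S := by exact_mod_cast card_pos.mpr ⟨a, haS⟩
  have hdemand : ∑ a' ∈ S, (1 - u a') = #S * (1 - v) := by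
    rw [sum_eq_card_nsmul fun a' ha' => by rw [hu a' ha'], nsmul_eq_mul]
  have hshare : 0 ≤ min β (#S * (1 - v)) := le_min hβ0 (by nlinarith)
  have hfit : v + min β (#S * (1 - v)) / #S ≤ 1 := by
    have := (div_le_iff₀' hcard).mpr (min_le_right β (#S * (1 - v)))
    linarith
  simp only [efStep, if_pos ha]
  rw [hβ, hS, hdemand, sSup_waterFill_eq S u ⟨a, haS⟩ hu hshare hfit, hu a haS,
    add_sub_cancel_left]
  exact max_eq_left (by positivity)

lemma uswInstance_length (n : ℕ) : (uswInstance n).length = n + n := by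
  simp [uswInstance]

lemma likersAt_uswInstance_red {n t : ℕ} (ht : t < n) :
    likersAt (uswInstance n) t = univ := by
  unfold likersAt uswInstance
  rw [List.getD_append _ _ _ _ (by simpa using ht), List.getD_eq_getElem _ _ (by simpa using ht)]
  simp

lemma likersAt_uswInstance_blue (n : ℕ) (j : Fin n) :
    likersAt (uswInstance n) (n + j) = {Sum.inl j} := by
  unfold likersAt uswInstance
  rw [List.getD_append_right _ _ _ _ (by simp), List.getD_eq_getElem _ _ (by simp)]
  simp

lemma filter_uswClassOf_castSucc (n : ℕ) (j : Fin n) :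
    (univ.filter fun a => uswClassOf n a = j.castSucc) = {Sum.inl j} := by
  ext (i | i) <;> rw [mem_filter] <;>
    simp [uswClassOf, Fin.castSucc_inj, (Fin.castSucc_lt_last j).ne']

lemma filter_uswClassOf_last (n : ℕ) :
    (univ.filter fun a => uswClassOf n a = Fin.last n) = univ.map Function.Embedding.inr := by
  ext (i | i) <;> rw [mem_filter] <;> simp [uswClassOf, (Fin.castSucc_lt_last i).ne]

def uswUtilAfterRed (n t : ℕ) : uswAgents n → ℝ :=
  Sum.elim (fun _ => t / (n + 1)) (fun _ => t / (n * (n + 1)))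

def uswUtilAfterBlue (n j : ℕ) : uswAgents n → ℝ :=
  Sum.elim (fun i => if (i : ℕ) < j then 1 else n / (n + 1)) (fun _ => 1 / (n + 1))

lemma efStep_uswUtilAfterRed {n t : ℕ} (ht : t < n) :
    efStep (uswClassOf n) (uswUtilAfterRed n t) univ =
      Sum.elim (fun _ => 1 / ((n : ℝ) + 1)) (fun _ => 1 / ((n : ℝ) + 1) / n) := by
  have hn : (0 : ℝ) < n := by exact_mod_cast (Nat.zero_le t).trans_lt ht
  have ht' : (t : ℝ) + 1 ≤ n := by exact_mod_cast ht
  have hsingle : 1 / ((n : ℝ) + 1) < 1 - t / (n + 1) := by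
    rw [lt_sub_iff_add_lt, ← add_div, div_lt_one (by positivity)]
    linarith
  have hbig : 1 / ((n : ℝ) + 1) < n * (1 - t / (n * (n + 1))) := by
    rw [show (n : ℝ) * (1 - t / (n * (n + 1))) = n - t / (n + 1) by field_simp,
      lt_sub_iff_add_lt, ← add_div, div_lt_iff₀ (by positivity)]
    nlinarith
  have hβ : sSup {b : ℝ | b ≤ 1 ∧ ∑ i : Fin (n + 1), min b
      (∑ a ∈ univ.filter fun a => uswClassOf n a = i, (1 - uswUtilAfterRed n t a)) ≤ 1} =
      1 / (n + 1) := by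
    have := sSup_equalSplit_eq_one_div_card (ι := Fin (n + 1)) (fun i =>
      ∑ a ∈ univ.filter fun a => uswClassOf n a = i, (1 - uswUtilAfterRed n t a)) ?_
    · simpa using this
    intro i
    rw [Fintype.card_fin, Nat.cast_succ]
    rcases Fin.eq_castSucc_or_eq_last i with ⟨j, rfl⟩ | rfl
    · simpa [filter_uswClassOf_castSucc, uswUtilAfterRed] using hsingle
    · simpa [filter_uswClassOf_last, uswUtilAfterRed, mul_sub] using hbig
  ext (i | i)
  · rw [efStep_eq_of_uniform_class _ _ _ (mem_univ (Sum.inl i)) hβ (by positivity)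
      (filter_uswClassOf_castSucc n i) (by simp [uswUtilAfterRed]) (v := t / (n + 1))]
    · rw [card_singleton, Nat.cast_one, one_mul, div_one, min_eq_left hsingle.le]
      rfl
    · exact div_le_one_of_le₀ (by linarith) (by positivity)
  · rw [efStep_eq_of_uniform_class _ _ _ (mem_univ (Sum.inr i)) hβ (by positivity)
      (filter_uswClassOf_last n) (by simp [uswUtilAfterRed]) (v := t / (n * (n + 1)))]
    · rw [card_map, card_univ, Fintype.card_fin, min_eq_left hbig.le]
      rfl
    · exact div_le_one_of_le₀ (by nlinarith) (by positivity)

lemma efStep_uswUtilAfterBlue (n : ℕ) (j : Fin n) :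
    efStep (uswClassOf n) (uswUtilAfterBlue n j) {Sum.inl j} =
      fun a => if a = Sum.inl j then 1 / ((n : ℝ) + 1) else 0 := by
  have hv : uswUtilAfterBlue n j (Sum.inl j) = n / (n + 1) := by simp [uswUtilAfterBlue]
  have hdemand : 1 - (n : ℝ) / (n + 1) = 1 / (n + 1) := by field_simp; ring
  have hβ : sSup {b : ℝ | b ≤ 1 ∧ ∑ i : Fin (n + 1), min b
      (∑ a ∈ ({Sum.inl j} : Finset (uswAgents n)).filter fun a => uswClassOf n a = i,
        (1 - uswUtilAfterBlue n j a)) ≤ 1} = 1 := by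
    refine sSup_equalSplit_eq_one _ ?_
    rw [sum_fiberwise, sum_singleton, hv, hdemand]
    exact div_le_one_of_le₀ (by simp) (by positivity)
  funext a
  by_cases ha : a = Sum.inl j
  · subst ha
    rw [efStep_eq_of_uniform_class _ _ _ (mem_singleton_self _) hβ zero_le_one
      (by rw [filter_singleton, if_pos rfl]) (fun a' ha' => by rw [mem_singleton.mp ha', hv])
      (div_le_one_of_le₀ (by linarith) (by positivity)), if_pos rfl,
      card_singleton, Nat.cast_one, one_mul, div_one, hdemand]
    exact min_eq_right (div_le_one_of_le₀ (by simp) (by positivity))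
  · simp [efStep, ha]

lemma efUtil_succ {V : Type*} [DecidableEq V] (classOf : V → Fin k) (L : List (Finset V))
    (t : ℕ) (a : V) :
    efUtil classOf L (t + 1) a = efUtil classOf L t a + efAlloc classOf L t a :=
  rfl

lemma sum_range_sum_efAlloc {V : Type*} [Fintype V] [DecidableEq V] (classOf : V → Fin k)
    (L : List (Finset V)) (T : ℕ) :
    ∑ t ∈ range T, ∑ a, efAlloc classOf L t a = ∑ a, efUtil classOf L T a := by
  induction T with
  | zero => simp [efUtil]
  | succ T ih => simp only [sum_range_succ, ih, efUtil_succ, sum_add_distrib]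

lemma efUtil_uswInstance_red {n t : ℕ} (ht : t ≤ n) :
    efUtil (uswClassOf n) (uswInstance n) t = uswUtilAfterRed n t := by
  induction t with
  | zero => ext (i | i) <;> simp [efUtil, uswUtilAfterRed]
  | succ t ih =>
    ext a
    rw [efUtil_succ, efAlloc, ih (by omega), likersAt_uswInstance_red (by omega),
      efStep_uswUtilAfterRed (by omega)]
    rcases a with i | i
    · simp only [uswUtilAfterRed, Sum.elim_inl]
      push_cast
      ring
    · have hn : (n : ℝ) ≠ 0 := by exact_mod_cast i.pos.ne'
      simp only [uswUtilAfterRed, Sum.elim_inr]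
      field_simp
      push_cast
      ring

lemma efUtil_uswInstance_blue {n j : ℕ} (hj : j ≤ n) :
    efUtil (uswClassOf n) (uswInstance n) (n + j) = uswUtilAfterBlue n j := by
  induction j with
  | zero =>
    rw [add_zero, efUtil_uswInstance_red le_rfl]
    ext (i | i)
    · simp [uswUtilAfterRed, uswUtilAfterBlue]
    · have hn : (n : ℝ) ≠ 0 := by exact_mod_cast i.pos.ne'
      simp only [uswUtilAfterRed, uswUtilAfterBlue, Sum.elim_inr]
      field_simp
  | succ j ih =>
    have hjn : j < n := by omega
    have hlikers : likersAt (uswInstance n) (n + j) = {Sum.inl ⟨j, hjn⟩} :=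
      likersAt_uswInstance_blue n ⟨j, hjn⟩
    have hstep : efStep (uswClassOf n) (uswUtilAfterBlue n j) {Sum.inl ⟨j, hjn⟩} =
        fun a => if a = Sum.inl ⟨j, hjn⟩ then 1 / ((n : ℝ) + 1) else 0 :=
      efStep_uswUtilAfterBlue n ⟨j, hjn⟩
    ext a
    rw [← add_assoc, efUtil_succ, efAlloc, ih hjn.le, hlikers, hstep]
    rcases a with i | i
    · simp only [uswUtilAfterBlue, Sum.elim_inl, Sum.inl.injEq, Fin.ext_iff]
      rcases lt_trichotomy (i : ℕ) j with h | h | h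
      · simp [h, h.ne, h.trans (Nat.lt_succ_self j)]
      · simp [h]
        field_simp
      · rw [if_neg (by omega), if_neg (by omega), if_neg (by omega), add_zero]
    · simp [uswUtilAfterBlue]

lemma uswEF_eq (n : ℕ) : uswEF n = n + n / (n + 1) := by
  rw [uswEF, sum_range_sum_efAlloc, uswInstance_length, efUtil_uswInstance_blue le_rfl]
  simp [uswUtilAfterBlue, Fintype.sum_sum_type]
  ring

lemma VstarFrac_eq_sum_of_saturating {V : Type*} (L : List (Finset V)) (C : Finset V)
    (y : ℕ → ℝ) (x : ℕ → V → ℝ) (hx : ∀ t a, 0 ≤ x t a)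
    (hsupp : ∀ t a, x t a ≠ 0 → a ∈ C ∧ a ∈ likersAt L t ∧ t < L.length)
    (hitem : ∀ t, ∑ a ∈ C, x t a ≤ y t) (hagent : ∀ a, ∑ t ∈ range L.length, x t a ≤ 1)
    (hsat : ∑ t ∈ range L.length, ∑ a ∈ C, x t a = ∑ t ∈ range L.length, y t) :
    VstarFrac L C y = ∑ t ∈ range L.length, y t := by
  refine IsGreatest.csSup_eq ⟨⟨x, hx, hsupp, hitem, hagent, hsat.symm⟩, ?_⟩
  rintro v ⟨x', -, -, hitem', -, rfl⟩
  exact sum_le_sum fun t _ => hitem' t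

def uswMatchedItem (n : ℕ) : uswAgents n ≃ Fin (n + n) :=
  (Equiv.sumComm _ _).trans finSumFinEquiv

lemma mem_likersAt_uswMatchedItem (n : ℕ) (a : uswAgents n) :
    a ∈ likersAt (uswInstance n) (uswMatchedItem n a) := by
  rcases a with i | i
  · have : ((uswMatchedItem n (Sum.inl i) : Fin (n + n)) : ℕ) = n + i := by
      simp [uswMatchedItem, add_comm]
    rw [this, likersAt_uswInstance_blue]
    exact mem_singleton_self _
  · have : ((uswMatchedItem n (Sum.inr i) : Fin (n + n)) : ℕ) = i := by simp [uswMatchedItem]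
    rw [this, likersAt_uswInstance_red i.isLt]
    exact mem_univ _

lemma VstarFrac_uswInstance (n : ℕ) :
    VstarFrac (uswInstance n) univ (fun _ => 1) = 2 * n := by
  have hitem (t : ℕ) :
      ∑ a, (if t = uswMatchedItem n a then (1 : ℝ) else 0) ≤ 1 := by
    rw [Equiv.sum_comp (uswMatchedItem n) (fun m => if t = (m : ℕ) then (1 : ℝ) else 0),
      Fin.sum_univ_eq_sum_range (fun m => if t = m then (1 : ℝ) else 0), sum_ite_eq]
    split_ifs <;> norm_num
  have hagent (a : uswAgents n) :
      ∑ t ∈ range (n + n), (if t = uswMatchedItem n a then (1 : ℝ) else 0) = 1 := by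
    rw [sum_ite_eq', if_pos (mem_range.mpr (uswMatchedItem n a).isLt)]
  rw [VstarFrac_eq_sum_of_saturating _ _ _ (fun t a => if t = uswMatchedItem n a then 1 else 0)
    (fun t a => by positivity) _ _ _ _]
  · simp [uswInstance_length]
    ring
  · intro t a h
    obtain rfl : t = uswMatchedItem n a := by by_contra h'; exact h (if_neg h')
    refine ⟨mem_univ a, mem_likersAt_uswMatchedItem n a, ?_⟩
    rw [uswInstance_length]
    exact (uswMatchedItem n a).isLt
  · exact hitem
  · intro a
    rw [uswInstance_length, hagent]
  · rw [uswInstance_length, sum_comm]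
    simp [hagent]

/-- Equal-Filling does not achieve `α`-USW for any `α > 1/2`: on the instance with
`n` singleton classes plus one class of `n` agents, `n` red items followed by `n`
blue items, Equal-Filling attains welfare exactly `n + n/(n+1)` while the optimum is
`2n`; hence for every `α > 1/2` some instance witnesses `uswEF < α · 2n`. -/
theorem stmt_19 :
    (∀ n : ℕ, 1 ≤ n →
      uswEF n = (n : ℝ) + (n : ℝ) / ((n : ℝ) + 1) ∧
      VstarFrac (uswInstance n) (Finset.univ : Finset (uswAgents n)) (fun _ => 1)
        = 2 * (n : ℝ)) ∧
    (∀ α : ℝ, α > 1 / 2 → ∃ n : ℕ, 1 ≤ n ∧ uswEF n < α * (2 * (n : ℝ))) := by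
  refine ⟨fun n _ => ⟨uswEF_eq n, VstarFrac_uswInstance n⟩, fun α hα => ?_⟩
  obtain ⟨n, hn⟩ := exists_nat_one_div_lt (by linarith : 0 < 2 * α - 1)
  refine ⟨n + 1, Nat.le_add_left 1 n, ?_⟩
  have hlt : 1 / ((n + 1 : ℕ) + 1 : ℝ) < 2 * α - 1 := by
    refine lt_of_le_of_lt (one_div_le_one_div_of_le (by positivity) ?_) hn
    push_cast
    linarith
  have hpos : (0 : ℝ) < (n + 1 : ℕ) := by positivity
  rw [uswEF_eq, div_eq_mul_one_div ((n + 1 : ℕ) : ℝ)]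
  nlinarith [mul_lt_mul_of_pos_left hlt hpos]

end
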